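/- arXiv:2002.07530 — 2 statements merged into one kernel-verified Lean document; each statement's English description precedes it below -/
import Mathlib

section
/- Let Θ ⊂ ℝ^d with max_{θ∈Θ} ‖θ‖₂ ≤ S, let x ∈ ℝ^d with ‖x‖₂ ≤ 1, and let μ be the sigmoid. Then for any θ₁, θ₂ ∈ Θ: α(x, θ₁, θ₂) := ∫₀¹ μ'(v·xᵀθ₂ + (1-v)·xᵀθ₁) dv ≥ (1 + 2S)^{-1} · μ'(xᵀθ₁). -/
/-!
Write `μ' = μ · (1 - μ) = μ(t) μ(-t)`. Since `μ(a + s) ≥ μ(a) e^{min(s, 0)}`, applying this to both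
factors shows that a shift by `s` costs `μ'` at most a factor `e^{-|s|}` (self-concordance). Along
the segment from `z₁` to `z₂` this gives `α ≥ μ'(z₁) ∫₀¹ e^{-c v} dv = μ'(z₁) (1 - e^{-c}) / c`
with `c = |z₂ - z₁|`, which is at least `μ'(z₁) / (1 + c)` because `(1 + c) e^{-c} ≤ 1`. Finally
`c = |⟪x, θ₂ - θ₁⟫| ≤ 2S` by Cauchy–Schwarz.
-/

open RealInnerProductSpace

noncomputable def sigmoid (x : ℝ) : ℝ := (1 + Real.exp (-x))⁻¹

lemma sigmoid_eq_real_sigmoid : sigmoid = Real.sigmoid := rfl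

namespace Real

lemma deriv_sigmoid_nonneg (t : ℝ) : 0 ≤ deriv sigmoid t := by
  rw [deriv_sigmoid]
  exact mul_nonneg (sigmoid_nonneg t) (sub_nonneg.2 (sigmoid_le_one t))

lemma sigmoid_mul_exp_min_le (a s : ℝ) : sigmoid a * exp (min s 0) ≤ sigmoid (a + s) := by
  have hm : exp (min s 0) ≤ 1 := exp_le_one_iff.2 (min_le_right s 0)
  have hms : exp (min s 0) * exp (-(a + s)) ≤ exp (-a) := by
    rw [← exp_add]
    exact exp_le_exp.2 (by linarith [min_le_left s 0])
  rw [sigmoid_def, sigmoid_def, inv_mul_eq_div, div_le_iff₀ (by positivity), ← div_eq_inv_mul,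
    le_div_iff₀ (by positivity)]
  linarith

lemma deriv_sigmoid_mul_exp_neg_abs_le (a s : ℝ) :
    deriv sigmoid a * exp (-|s|) ≤ deriv sigmoid (a + s) := by
  have hmin : -|s| = min s 0 + min (-s) 0 := by
    rcases le_total 0 s with hs | hs <;> simp [hs, abs_of_nonneg, abs_of_nonpos]
  simp only [deriv_sigmoid, ← sigmoid_neg, neg_add]
  calc sigmoid a * sigmoid (-a) * exp (-|s|)
      = (sigmoid a * exp (min s 0)) * (sigmoid (-a) * exp (min (-s) 0)) := by
        rw [hmin, exp_add]; ring
    _ ≤ sigmoid (a + s) * sigmoid (-a + -s) :=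
        mul_le_mul (sigmoid_mul_exp_min_le a s) (sigmoid_mul_exp_min_le (-a) (-s))
          (mul_nonneg (sigmoid_nonneg _) (exp_nonneg _)) (sigmoid_nonneg _)

lemma inv_one_add_le_integral_exp_neg_mul {c : ℝ} (hc : 0 ≤ c) :
    (1 + c)⁻¹ ≤ ∫ v in (0:ℝ)..1, exp (-(c * v)) := by
  rcases hc.eq_or_lt with rfl | hc
  · simp
  have hint : ∫ v in (0:ℝ)..1, exp (-(c * v)) = (1 - exp (-c)) / c := by
    simp only [intervalIntegral.integral_comp_mul_left (fun v => exp (-v)) hc.ne', mul_zero,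
      mul_one, intervalIntegral.integral_comp_neg, neg_zero, integral_exp, exp_zero, smul_eq_mul]
    ring
  have hexp : (1 + c) * exp (-c) ≤ 1 := by
    calc (1 + c) * exp (-c) ≤ exp c * exp (-c) := by gcongr; linarith [add_one_le_exp c]
      _ = 1 := by rw [← exp_add, add_neg_cancel, exp_zero]
  rw [hint, le_div_iff₀ hc, inv_mul_eq_div, div_le_iff₀ (by positivity)]
  nlinarith

theorem deriv_sigmoid_div_le_integral (z₁ z₂ : ℝ) :
    deriv sigmoid z₁ / (1 + |z₂ - z₁|) ≤
      ∫ v in (0:ℝ)..1, deriv sigmoid (v * z₂ + (1 - v) * z₁) := by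
  have hcont : Continuous (deriv sigmoid) := by
    rw [deriv_sigmoid]
    fun_prop
  calc deriv sigmoid z₁ / (1 + |z₂ - z₁|)
      ≤ deriv sigmoid z₁ * ∫ v in (0:ℝ)..1, exp (-(|z₂ - z₁| * v)) := by
        rw [div_eq_mul_inv]
        gcongr
        · exact deriv_sigmoid_nonneg z₁
        · exact inv_one_add_le_integral_exp_neg_mul (abs_nonneg _)
    _ = ∫ v in (0:ℝ)..1, deriv sigmoid z₁ * exp (-|v * (z₂ - z₁)|) := by
        rw [← intervalIntegral.integral_const_mul]
        refine intervalIntegral.integral_congr fun v hv => ?_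
        rw [abs_mul, abs_of_nonneg (by simpa using hv.1 : (0:ℝ) ≤ v), mul_comm v]
    _ ≤ ∫ v in (0:ℝ)..1, deriv sigmoid (z₁ + v * (z₂ - z₁)) := by
        refine intervalIntegral.integral_mono_on zero_le_one ?_ ?_
          fun v _ => deriv_sigmoid_mul_exp_neg_abs_le z₁ _
        · exact Continuous.intervalIntegrable (by fun_prop) _ _
        · exact Continuous.intervalIntegrable (by fun_prop) _ _
    _ = _ := by congr with v; ring_nf

end Real

theorem alpha_lower_bound_general {d : ℕ} (Θ : Set (EuclideanSpace ℝ (Fin d)))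
    (S : ℝ) (hΘ : ∀ θ ∈ Θ, ‖θ‖ ≤ S)
    (x : EuclideanSpace ℝ (Fin d)) (hx : ‖x‖ ≤ 1)
    (θ₁ θ₂ : EuclideanSpace ℝ (Fin d)) (hθ₁ : θ₁ ∈ Θ) (hθ₂ : θ₂ ∈ Θ) :
    (1 + 2 * S)⁻¹ * deriv sigmoid ⟪x, θ₁⟫ ≤
      ∫ v in (0:ℝ)..1, deriv sigmoid (v * ⟪x, θ₂⟫ + (1 - v) * ⟪x, θ₁⟫) := by
  have hdist : |⟪x, θ₂⟫ - ⟪x, θ₁⟫| ≤ 2 * S := by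
    rw [← inner_sub_right]
    calc |⟪x, θ₂ - θ₁⟫| ≤ ‖x‖ * ‖θ₂ - θ₁‖ := abs_real_inner_le_norm _ _
      _ ≤ 1 * (‖θ₂‖ + ‖θ₁‖) := by gcongr; exact norm_sub_le _ _
      _ ≤ 2 * S := by linarith [hΘ θ₁ hθ₁, hΘ θ₂ hθ₂]
  rw [sigmoid_eq_real_sigmoid]
  calc (1 + 2 * S)⁻¹ * deriv Real.sigmoid ⟪x, θ₁⟫
      ≤ deriv Real.sigmoid ⟪x, θ₁⟫ / (1 + |⟪x, θ₂⟫ - ⟪x, θ₁⟫|) := by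
        rw [div_eq_inv_mul]
        gcongr
        exact Real.deriv_sigmoid_nonneg _
    _ ≤ _ := Real.deriv_sigmoid_div_le_integral _ _

theorem alpha_lower_bound {d : ℕ} (Θ : Set (EuclideanSpace ℝ (Fin d)))
    (S : ℝ) (hS : 0 ≤ S) (hΘ : ∀ θ ∈ Θ, ‖θ‖ ≤ S)
    (x : EuclideanSpace ℝ (Fin d)) (hx : ‖x‖ ≤ 1)
    (θ₁ θ₂ : EuclideanSpace ℝ (Fin d)) (hθ₁ : θ₁ ∈ Θ) (hθ₂ : θ₂ ∈ Θ) :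
    (1 + 2 * S)⁻¹ * deriv sigmoid ⟪x, θ₁⟫ ≤
      ∫ v in (0:ℝ)..1, deriv sigmoid (v * ⟪x, θ₂⟫ + (1 - v) * ⟪x, θ₁⟫) :=
  alpha_lower_bound_general Θ S hΘ x hx θ₁ θ₂ hθ₁ hθ₂
end

section
/- Let x_1,…,x_{t-1} ∈ ℝ^d with ‖x_s‖₂ ≤ 1, Θ ⊂ ℝ^d with sup norm bound S, λ > 0, μ the sigmoid, and θ₁, θ₂ ∈ Θ. Define G_t(θ₁,θ₂) := Σ_s α(x_s, θ₁, θ₂) x_s x_sᵀ + λ I_d and H_t(θ₁) := Σ_s μ'(x_sᵀθ₁) x_s x_sᵀ + λ I_d, where α(x,θ₁,θ₂) = ∫₀¹ μ'(v xᵀθ₂ + (1-v) xᵀθ₁) dv. Then G_t(θ₁,θ₂) ⪰ (1+2S)^{-1} H_t(θ₁) in the positive semidefinite order. -/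
/-!
The derivative of the sigmoid is `μ'(y) = (2 + eʸ + e⁻ʸ)⁻¹`, so `μ'(b + u) ≥ e^{-|u|} μ'(b)`.
Since `|⟪x_s, θ₂ - θ₁⟫| ≤ 2S`, integrating along the segment gives
`α_s ≥ μ'(⟪x_s, θ₁⟫) ∫₀¹ e^{-2Sv} dv ≥ (1 + 2S)⁻¹ μ'(⟪x_s, θ₁⟫)`. Hence `G - (1 + 2S)⁻¹ H` is again
a regularized Gram matrix `∑ w_s x_s x_sᵀ + λ' I`, with nonnegative weights and `λ' ≥ 0`.
-/

open RealInnerProductSpace Matrix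

lemma deriv_sigmoid_eq (y : ℝ) : deriv sigmoid y = (2 + Real.exp y + Real.exp (-y))⁻¹ := by
  change deriv Real.sigmoid y = _
  rw [(Real.hasDerivAt_sigmoid y).deriv, ← Real.sigmoid_neg, Real.sigmoid_def,
    Real.sigmoid_def, neg_neg, ← mul_inv]
  congr 1
  rw [show (1 + Real.exp (-y)) * (1 + Real.exp y) = 1 + Real.exp (-y) * Real.exp y
    + Real.exp (-y) + Real.exp y by ring, ← Real.exp_add, neg_add_cancel, Real.exp_zero]
  ring

lemma continuous_deriv_sigmoid : Continuous (deriv sigmoid) :=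
  contDiff_sigmoid.continuous_deriv (by simp)

lemma exp_neg_abs_mul_deriv_sigmoid_le (b u : ℝ) :
    Real.exp (-|u|) * deriv sigmoid b ≤ deriv sigmoid (b + u) := by
  rw [deriv_sigmoid_eq, deriv_sigmoid_eq, Real.exp_neg, ← mul_inv]
  refine inv_anti₀ (by positivity) ?_
  rw [mul_add, mul_add, ← Real.exp_add, ← Real.exp_add]
  gcongr ?_ + ?_ + ?_
  · linarith [Real.one_le_exp (abs_nonneg u)]
  · exact Real.exp_le_exp.mpr (by linarith [le_abs_self u])
  · exact Real.exp_le_exp.mpr (by linarith [neg_abs_le u])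

lemma inv_one_add_le_integral_exp_neg_mul {r : ℝ} (hr : 0 ≤ r) :
    (1 + r)⁻¹ ≤ ∫ v in (0:ℝ)..1, Real.exp (-r * v) := by
  rcases hr.eq_or_lt with rfl | hr_pos
  · simp
  have hint : ∫ v in (0:ℝ)..1, Real.exp (-r * v) = (1 - Real.exp (-r)) / r := by
    rw [intervalIntegral.integral_comp_mul_left Real.exp (neg_ne_zero.mpr hr_pos.ne'), integral_exp]
    simp only [inv_neg, mul_one, mul_zero, Real.exp_zero, smul_eq_mul, neg_mul]
    field_simp
    ring
  have hexp : (1 + r) / Real.exp r ≤ 1 :=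
    (div_le_one (Real.exp_pos r)).mpr (by linarith [Real.add_one_le_exp r])
  rw [hint, le_div_iff₀ hr_pos, inv_mul_le_iff₀ (by linarith), Real.exp_neg, mul_sub, mul_one,
    ← div_eq_mul_inv]
  linarith

lemma inv_one_add_mul_deriv_sigmoid_le_integral {a b r : ℝ} (hab : |a - b| ≤ r) :
    (1 + r)⁻¹ * deriv sigmoid b ≤ ∫ v in (0:ℝ)..1, deriv sigmoid (v * a + (1 - v) * b) := by
  have hr : 0 ≤ |a - b| := abs_nonneg _
  calc (1 + r)⁻¹ * deriv sigmoid b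
      ≤ (∫ v in (0:ℝ)..1, Real.exp (-|a - b| * v)) * deriv sigmoid b := by
        gcongr
        · rw [deriv_sigmoid_eq]; positivity
        · exact (inv_anti₀ (by positivity) (by linarith)).trans
            (inv_one_add_le_integral_exp_neg_mul hr)
    _ = ∫ v in (0:ℝ)..1, Real.exp (-|v * (a - b)|) * deriv sigmoid b := by
        rw [← intervalIntegral.integral_mul_const]
        refine intervalIntegral.integral_congr fun v hv => ?_
        rw [Set.uIcc_of_le zero_le_one] at hv
        rw [abs_mul, abs_of_nonneg hv.1]
        ring_nf
    _ ≤ ∫ v in (0:ℝ)..1, deriv sigmoid (v * a + (1 - v) * b) := by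
        refine intervalIntegral.integral_mono_on zero_le_one
          (Continuous.intervalIntegrable (by fun_prop) _ _)
          ((continuous_deriv_sigmoid.comp (by fun_prop)).intervalIntegrable _ _) fun v _ => ?_
        convert exp_neg_abs_mul_deriv_sigmoid_le b (v * (a - b)) using 2
        ring

section RegularizedGram

variable {ι n : Type*} [DecidableEq n]

def regularizedGram (s : Finset ι) (v : ι → n → ℝ) (w : ι → ℝ) (lam : ℝ) : Matrix n n ℝ :=
  ∑ i ∈ s, w i • vecMulVec (v i) (v i) + lam • 1

lemma regularizedGram_sub_smul (s : Finset ι) (v : ι → n → ℝ) (α β : ι → ℝ) (lam c : ℝ) :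
    regularizedGram s v α lam - c • regularizedGram s v β lam =
      regularizedGram s v (fun i => α i - c * β i) ((1 - c) * lam) := by
  simp only [regularizedGram, smul_add, Finset.smul_sum, smul_smul, sub_smul,
    Finset.sum_sub_distrib]
  module

lemma posSemidef_regularizedGram [Fintype n] {s : Finset ι} {w : ι → ℝ} {lam : ℝ}
    (v : ι → n → ℝ) (hw : ∀ i ∈ s, 0 ≤ w i) (hlam : 0 ≤ lam) :
    (regularizedGram s v w lam).PosSemidef :=
  (posSemidef_sum s fun i hi => by
      simpa using (posSemidef_vecMulVec_self_star (v i)).smul (hw i hi)).add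
    (PosSemidef.one.smul hlam)

end RegularizedGram

lemma abs_inner_sub_inner_le {d : ℕ} {S : ℝ} {x θ₁ θ₂ : EuclideanSpace ℝ (Fin d)}
    (hx : ‖x‖ ≤ 1) (hθ₁ : ‖θ₁‖ ≤ S) (hθ₂ : ‖θ₂‖ ≤ S) : |⟪x, θ₂⟫ - ⟪x, θ₁⟫| ≤ 2 * S := by
  rw [← inner_sub_right]
  calc |⟪x, θ₂ - θ₁⟫| ≤ ‖x‖ * ‖θ₂ - θ₁‖ := abs_real_inner_le_norm _ _
    _ ≤ 1 * (‖θ₂‖ + ‖θ₁‖) := by gcongr; exact norm_sub_le _ _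
    _ ≤ 2 * S := by linarith

theorem Gt_loewner_ge_Ht_general {d n : ℕ} (Θ : Set (EuclideanSpace ℝ (Fin d)))
    (S : ℝ) (hΘ : ∀ θ ∈ Θ, ‖θ‖ ≤ S)
    (x : ℕ → EuclideanSpace ℝ (Fin d)) (hx : ∀ s, ‖x s‖ ≤ 1)
    (lam : ℝ) (hlam : 0 < lam)
    (θ₁ θ₂ : EuclideanSpace ℝ (Fin d)) (hθ₁ : θ₁ ∈ Θ) (hθ₂ : θ₂ ∈ Θ)
    (G H : Matrix (Fin d) (Fin d) ℝ)
    (hG : G = (∑ s ∈ Finset.Icc 1 n,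
        (∫ v in (0:ℝ)..1, deriv sigmoid (v * ⟪x s, θ₂⟫ + (1 - v) * ⟪x s, θ₁⟫)) •
          Matrix.vecMulVec (x s) (x s)) + lam • (1 : Matrix (Fin d) (Fin d) ℝ))
    (hH : H = (∑ s ∈ Finset.Icc 1 n,
        deriv sigmoid ⟪x s, θ₁⟫ • Matrix.vecMulVec (x s) (x s))
          + lam • (1 : Matrix (Fin d) (Fin d) ℝ)) :
    (G - (1 + 2 * S)⁻¹ • H).PosSemidef := by
  have hS : 0 ≤ S := (norm_nonneg θ₁).trans (hΘ θ₁ hθ₁)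
  have hc : (1 + 2 * S)⁻¹ ≤ 1 := inv_le_one_of_one_le₀ (by linarith)
  subst hG hH
  change (regularizedGram _ (fun s => x s) _ lam
    - _ • regularizedGram _ (fun s => x s) (fun s => deriv sigmoid ⟪x s, θ₁⟫) lam).PosSemidef
  rw [regularizedGram_sub_smul]
  refine posSemidef_regularizedGram _ (fun s _ => sub_nonneg.mpr ?_)
    (mul_nonneg (sub_nonneg.mpr hc) hlam.le)
  exact inv_one_add_mul_deriv_sigmoid_le_integral
    (abs_inner_sub_inner_le (hx s) (hΘ θ₁ hθ₁) (hΘ θ₂ hθ₂))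

theorem Gt_loewner_ge_Ht {d n : ℕ} (Θ : Set (EuclideanSpace ℝ (Fin d)))
    (S : ℝ) (hS : 0 < S) (hΘ : ∀ θ ∈ Θ, ‖θ‖ ≤ S)
    (x : ℕ → EuclideanSpace ℝ (Fin d)) (hx : ∀ s, ‖x s‖ ≤ 1)
    (lam : ℝ) (hlam : 0 < lam)
    (θ₁ θ₂ : EuclideanSpace ℝ (Fin d)) (hθ₁ : θ₁ ∈ Θ) (hθ₂ : θ₂ ∈ Θ)
    (G H : Matrix (Fin d) (Fin d) ℝ)
    (hG : G = (∑ s ∈ Finset.Icc 1 n,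
        (∫ v in (0:ℝ)..1, deriv sigmoid (v * ⟪x s, θ₂⟫ + (1 - v) * ⟪x s, θ₁⟫)) •
          Matrix.vecMulVec (x s) (x s)) + lam • (1 : Matrix (Fin d) (Fin d) ℝ))
    (hH : H = (∑ s ∈ Finset.Icc 1 n,
        deriv sigmoid ⟪x s, θ₁⟫ • Matrix.vecMulVec (x s) (x s))
          + lam • (1 : Matrix (Fin d) (Fin d) ℝ)) :
    (G - (1 + 2 * S)⁻¹ • H).PosSemidef :=
  Gt_loewner_ge_Ht_general Θ S hΘ x hx lam hlam θ₁ θ₂ hθ₁ hθ₂ G H hG hH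
end
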